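/- arXiv:2404.16281 — 3 statements merged into one kernel-verified Lean document; each statement's English description precedes it below -/
import Mathlib

section
/- Data processing inequality for L-conditional entropy: if Y ↔ X ↔ Z is a Markov chain (i.e., Y and Z are conditionally independent given X), then H_L(Y|X) ≤ H_L(Y|Z). -/
open Finset

noncomputable def condH {Ω ZT 𝒴 A : Type*} [Fintype Ω] [Fintype ZT] [DecidableEq ZT]
    (P : Ω → ℝ) (L : 𝒴 → A → ℝ) (Yv : Ω → 𝒴) (Zv : Ω → ZT) : ℝ :=
  ∑ z : ZT, sInf {r : ℝ | ∃ a : A,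
    r = ∑ ω : Ω, (if Zv ω = z then P ω else 0) * L (Yv ω) a}

/-!
For each `z`, fix a Bayes action `a z` for the weights of `{Z = z}`. Given `X = x`, choosing
`a z` with probability `P(Z = z | X = x)` is a randomized decision for `Y` based on `X`; by the
Markov property its expected loss is exactly the contribution of `{X = x}` to `H_L(Y|Z)`, and no
randomized decision beats the Bayes risk given `X = x`.
-/

section BayesRisk

variable {Ω 𝒴 A : Type*} [Fintype Ω] (L : 𝒴 → A → ℝ) (Yv : Ω → 𝒴)

noncomputable def bayesRisk (w : Ω → ℝ) : ℝ :=
  sInf {r : ℝ | ∃ a : A, r = ∑ ω, w ω * L (Yv ω) a}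

variable {L Yv}

theorem bayesRisk_eq {w : Ω → ℝ} {a : A}
    (ha : ∀ a' : A, ∑ ω, w ω * L (Yv ω) a ≤ ∑ ω, w ω * L (Yv ω) a') :
    bayesRisk L Yv w = ∑ ω, w ω * L (Yv ω) a :=
  IsLeast.csInf_eq ⟨⟨a, rfl⟩, by rintro r ⟨a', rfl⟩; exact ha a'⟩

theorem bayesRisk_le {w : Ω → ℝ}
    (hw : ∃ a : A, ∀ a' : A, ∑ ω, w ω * L (Yv ω) a ≤ ∑ ω, w ω * L (Yv ω) a') (a' : A) :
    bayesRisk L Yv w ≤ ∑ ω, w ω * L (Yv ω) a' := by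
  obtain ⟨a, ha⟩ := hw
  exact (bayesRisk_eq ha).trans_le (ha a')

theorem bayesRisk_le_sum_mul {ι : Type*} [Fintype ι] {w : Ω → ℝ}
    (hw : ∃ a : A, ∀ a' : A, ∑ ω, w ω * L (Yv ω) a ≤ ∑ ω, w ω * L (Yv ω) a')
    (c : ι → ℝ) (hc : ∀ i, 0 ≤ c i) (hc1 : ∑ i, c i = 1) (a : ι → A) :
    bayesRisk L Yv w ≤ ∑ i, c i * ∑ ω, w ω * L (Yv ω) (a i) :=
  calc bayesRisk L Yv w = ∑ i, c i * bayesRisk L Yv w := by rw [← sum_mul, hc1, one_mul]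
    _ ≤ ∑ i, c i * ∑ ω, w ω * L (Yv ω) (a i) := by
      gcongr with i
      · exact hc i
      · exact bayesRisk_le hw (a i)

end BayesRisk

section Markov

variable {Ω 𝒴 𝒳 𝒵 : Type*} [Fintype Ω] [DecidableEq 𝒴] [DecidableEq 𝒳] [DecidableEq 𝒵]

theorem sum_mul_comp_eq_sum_image (Yv : Ω → 𝒴) (g : Ω → ℝ) (f : 𝒴 → ℝ) :
    ∑ ω, g ω * f (Yv ω) = ∑ y ∈ univ.image Yv, (∑ ω, if Yv ω = y then g ω else 0) * f y := by
  rw [← sum_fiberwise_of_maps_to (fun ω _ => mem_image_of_mem Yv (mem_univ ω))]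
  refine sum_congr rfl fun y _ => ?_
  rw [sum_filter, sum_mul]
  refine sum_congr rfl fun ω _ => ?_
  split_ifs with hy <;> simp [hy]

/-- Cross-multiplied form of `E[f Y | X = x, Z = z] = E[f Y | X = x]`. -/
theorem markov_sum_mul_eq (P : Ω → ℝ) (Yv : Ω → 𝒴) (Xv : Ω → 𝒳) (Zv : Ω → 𝒵) (x : 𝒳) (z : 𝒵)
    (hMarkov : ∀ y : 𝒴,
      (∑ ω, if Yv ω = y ∧ Xv ω = x ∧ Zv ω = z then P ω else 0) *
        (∑ ω, if Xv ω = x then P ω else 0) =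
      (∑ ω, if Yv ω = y ∧ Xv ω = x then P ω else 0) *
        (∑ ω, if Xv ω = x ∧ Zv ω = z then P ω else 0))
    (f : 𝒴 → ℝ) :
    (∑ ω, (if Xv ω = x ∧ Zv ω = z then P ω else 0) * f (Yv ω)) *
        (∑ ω, if Xv ω = x then P ω else 0) =
      (∑ ω, (if Xv ω = x then P ω else 0) * f (Yv ω)) *
        (∑ ω, if Xv ω = x ∧ Zv ω = z then P ω else 0) := by
  rw [sum_mul_comp_eq_sum_image Yv, sum_mul_comp_eq_sum_image Yv, sum_mul, sum_mul]
  refine sum_congr rfl fun y _ => ?_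
  simp only [← ite_and]
  linear_combination f y * hMarkov y

theorem bayesRisk_le_sum_of_markov [Fintype 𝒵] {A : Type*} (P : Ω → ℝ) (L : 𝒴 → A → ℝ)
    (Yv : Ω → 𝒴) (Xv : Ω → 𝒳) (Zv : Ω → 𝒵) (hnn : ∀ ω, 0 ≤ P ω) (x : 𝒳)
    (hMarkov : ∀ (y : 𝒴) (z : 𝒵),
      (∑ ω, if Yv ω = y ∧ Xv ω = x ∧ Zv ω = z then P ω else 0) *
        (∑ ω, if Xv ω = x then P ω else 0) =
      (∑ ω, if Yv ω = y ∧ Xv ω = x then P ω else 0) *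
        (∑ ω, if Xv ω = x ∧ Zv ω = z then P ω else 0))
    (hw : ∃ a : A, ∀ a' : A, ∑ ω, (if Xv ω = x then P ω else 0) * L (Yv ω) a ≤
      ∑ ω, (if Xv ω = x then P ω else 0) * L (Yv ω) a')
    (a : 𝒵 → A) :
    bayesRisk L Yv (fun ω => if Xv ω = x then P ω else 0) ≤
      ∑ z, ∑ ω, (if Xv ω = x ∧ Zv ω = z then P ω else 0) * L (Yv ω) (a z) := by
  set p := ∑ ω, if Xv ω = x then P ω else 0 with hp_def
  set s : 𝒵 → ℝ := fun z => ∑ ω, if Xv ω = x ∧ Zv ω = z then P ω else 0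
  have hp_nonneg : 0 ≤ p := sum_nonneg fun ω _ => ite_nonneg (hnn ω) le_rfl
  rcases hp_nonneg.eq_or_lt with hp | hp
  · have hzero : ∀ ω, Xv ω = x → P ω = 0 := fun ω hω => by
      simpa [hω] using (sum_eq_zero_iff_of_nonneg fun ω _ => ite_nonneg (hnn ω) le_rfl).1
        hp.symm ω (mem_univ ω)
    obtain ⟨a₀, -⟩ := id hw
    calc bayesRisk L Yv (fun ω => if Xv ω = x then P ω else 0)
        ≤ ∑ ω, (if Xv ω = x then P ω else 0) * L (Yv ω) a₀ := bayesRisk_le hw a₀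
      _ = ∑ z, ∑ ω, (if Xv ω = x ∧ Zv ω = z then P ω else 0) * L (Yv ω) (a z) := by
        simp +contextual [hzero]
  · have hs : ∑ z, s z = p := by
      simp only [s, hp_def]
      rw [sum_comm]
      simp [ite_and]
    calc bayesRisk L Yv (fun ω => if Xv ω = x then P ω else 0)
        ≤ ∑ z, s z / p * ∑ ω, (if Xv ω = x then P ω else 0) * L (Yv ω) (a z) :=
          bayesRisk_le_sum_mul hw _ (fun z => div_nonneg (sum_nonneg fun ω _ =>
            ite_nonneg (hnn ω) le_rfl) hp.le) (by rw [← sum_div, hs, div_self hp.ne']) a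
      _ = ∑ z, ∑ ω, (if Xv ω = x ∧ Zv ω = z then P ω else 0) * L (Yv ω) (a z) := by
        refine sum_congr rfl fun z _ => ?_
        rw [div_mul_eq_mul_div, div_eq_iff hp.ne']
        exact ((markov_sum_mul_eq P Yv Xv Zv x z (hMarkov · z) (L · (a z))).trans
          (mul_comm _ _)).symm

end Markov

theorem stmt4_general {Ω 𝒴 𝒳 𝒵 A : Type*} [Fintype Ω] [Fintype 𝒳] [Fintype 𝒵]
    [DecidableEq 𝒴] [DecidableEq 𝒳] [DecidableEq 𝒵]
    (P : Ω → ℝ) (L : 𝒴 → A → ℝ) (Yv : Ω → 𝒴) (Xv : Ω → 𝒳) (Zv : Ω → 𝒵)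
    (hnn : ∀ ω, 0 ≤ P ω)
    (hMarkov : ∀ (y : 𝒴) (x : 𝒳) (z : 𝒵),
      (∑ ω, if Yv ω = y ∧ Xv ω = x ∧ Zv ω = z then P ω else 0) *
        (∑ ω, if Xv ω = x then P ω else 0) =
      (∑ ω, if Yv ω = y ∧ Xv ω = x then P ω else 0) *
        (∑ ω, if Xv ω = x ∧ Zv ω = z then P ω else 0))
    (hattain : ∀ w : Ω → ℝ, (∀ ω, 0 ≤ w ω) →
      ∃ a : A, ∀ a' : A, ∑ ω, w ω * L (Yv ω) a ≤ ∑ ω, w ω * L (Yv ω) a') :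
    condH P L Yv Xv ≤ condH P L Yv Zv := by
  choose a ha using fun z : 𝒵 =>
    hattain (fun ω => if Zv ω = z then P ω else 0) fun ω => ite_nonneg (hnn ω) le_rfl
  calc condH P L Yv Xv = ∑ x, bayesRisk L Yv (fun ω => if Xv ω = x then P ω else 0) := rfl
    _ ≤ ∑ x, ∑ z, ∑ ω, (if Xv ω = x ∧ Zv ω = z then P ω else 0) * L (Yv ω) (a z) :=
      sum_le_sum fun x _ =>
        bayesRisk_le_sum_of_markov P L Yv Xv Zv hnn x (hMarkov · x)
          (hattain _ fun ω => ite_nonneg (hnn ω) le_rfl) a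
    _ = ∑ z, ∑ ω, (if Zv ω = z then P ω else 0) * L (Yv ω) (a z) := by
      rw [sum_comm]
      refine sum_congr rfl fun z _ => ?_
      rw [sum_comm]
      simp [ite_and]
    _ = condH P L Yv Zv := sum_congr rfl fun z _ => (bayesRisk_eq (ha z)).symm

/-- data processing inequality for L-conditional entropy: if
`Y ↔ X ↔ Z` is a Markov chain (Y and Z conditionally independent given X), then
`H_L(Y|X) ≤ H_L(Y|Z)`. -/
theorem stmt4 {Ω 𝒴 𝒳 𝒵 A : Type*} [Fintype Ω] [Fintype 𝒳] [Fintype 𝒵]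
    [DecidableEq 𝒴] [DecidableEq 𝒳] [DecidableEq 𝒵]
    (P : Ω → ℝ) (L : 𝒴 → A → ℝ) (Yv : Ω → 𝒴) (Xv : Ω → 𝒳) (Zv : Ω → 𝒵)
    (hnn : ∀ ω, 0 ≤ P ω) (h1 : ∑ ω, P ω = 1)
    (hMarkov : ∀ (y : 𝒴) (x : 𝒳) (z : 𝒵),
      (∑ ω, if Yv ω = y ∧ Xv ω = x ∧ Zv ω = z then P ω else 0) *
        (∑ ω, if Xv ω = x then P ω else 0) =
      (∑ ω, if Yv ω = y ∧ Xv ω = x then P ω else 0) *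
        (∑ ω, if Xv ω = x ∧ Zv ω = z then P ω else 0))
    (hattain : ∀ w : Ω → ℝ, (∀ ω, 0 ≤ w ω) →
      ∃ a : A, ∀ a' : A, ∑ ω, w ω * L (Yv ω) a ≤ ∑ ω, w ω * L (Yv ω) a') :
    condH P L Yv Xv ≤ condH P L Yv Zv :=
  stmt4_general P L Yv Xv Zv hnn hMarkov hattain
end

section
/- In the causal system Y_t = f(X_{t−d}) where {X_t} is a Markov chain, the L-conditional entropy H_L(Y_t | X_{t−δ}) is nonincreasing in δ for 0 ≤ δ ≤ d, nondecreasing in δ for δ ≥ d, and the feature X_{t−d} minimizes the conditional entropy over all 𝒳-valued random variables: H_L(Y_t | X_{t−d}) = H_L(Y_t | Y_t) ≤ H_L(Y_t | Z) for every random variable Z taking values in 𝒳. -/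
open Finset

section helpers
variable {Ω 𝒴 A : Type*} [Fintype Ω]

/-- Split an L-weighted indicator sum over the fibers of a map `F`. -/
lemma sum_if_mul_fiber {𝒳 : Type*} [Fintype 𝒳] [DecidableEq 𝒳]
    (P : Ω → ℝ) (Q : Ω → Prop) [DecidablePred Q] (F : Ω → 𝒳) (ℓ : 𝒳 → ℝ) :
    ∑ ω, (if Q ω then P ω else 0) * ℓ (F ω)
      = ∑ x, (∑ ω, if Q ω ∧ F ω = x then P ω else 0) * ℓ x := by
  simp only [Finset.sum_mul]
  rw [Finset.sum_comm]
  apply Finset.sum_congr rfl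
  intro ω _
  by_cases hQ : Q ω
  · simp only [hQ, true_and, if_true]
    rw [Finset.sum_eq_single (F ω)]
    · simp
    · intro x _ hx
      simp [Ne.symm hx]
    · simp
  · simp [hQ]

/-- If `Y` is constant `b` on the support of the indicator, the L-sum factors. -/
lemma sum_if_mul_const (P : Ω → ℝ) (Q : Ω → Prop) [DecidablePred Q]
    (Y : Ω → 𝒴) (b : 𝒴) (L : 𝒴 → A → ℝ) (a : A) (h : ∀ ω, Q ω → Y ω = b) :
    ∑ ω, (if Q ω then P ω else 0) * L (Y ω) a
      = (∑ ω, if Q ω then P ω else 0) * L b a := by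
  rw [Finset.sum_mul]
  apply Finset.sum_congr rfl
  intro ω _
  by_cases hq : Q ω
  · simp [hq, h ω hq]
  · simp [hq]

lemma sum_if_congr (P : Ω → ℝ) (Q R : Ω → Prop) [DecidablePred Q] [DecidablePred R]
    (h : ∀ ω, Q ω ↔ R ω) :
    (∑ ω, if Q ω then P ω else 0) = ∑ ω, if R ω then P ω else 0 := by
  apply Finset.sum_congr rfl
  intro ω _
  exact if_congr (h ω) rfl rfl

end helpers

lemma key {Ω 𝒴 A WT ZT : Type*} [Fintype Ω] [Fintype WT] [Fintype ZT]
    [DecidableEq WT] [DecidableEq ZT]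
    (P : Ω → ℝ) (L : 𝒴 → A → ℝ) (Y : Ω → 𝒴) (W : Ω → WT) (Z : Ω → ZT)
    (hnn : ∀ ω, 0 ≤ P ω)
    (hatt : ∀ w : Ω → ℝ, (∀ ω, 0 ≤ w ω) →
      ∃ a : A, ∀ a' : A, ∑ ω, w ω * L (Y ω) a ≤ ∑ ω, w ω * L (Y ω) a')
    (hCI : ∀ (b : WT) (c : ZT) (a : A),
      (∑ ω, (if W ω = b ∧ Z ω = c then P ω else 0) * L (Y ω) a) *
        (∑ ω, if W ω = b then P ω else 0)
      = (∑ ω, (if W ω = b then P ω else 0) * L (Y ω) a) *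
        (∑ ω, if W ω = b ∧ Z ω = c then P ω else 0)) :
    condH P L Y W ≤ condH P L Y Z := by
  classical
  set S : (Ω → ℝ) → A → ℝ := fun w a => ∑ ω, w ω * L (Y ω) a with hS
  set g : (Ω → ℝ) → ℝ := fun w => sInf {r : ℝ | ∃ a : A, r = S w a} with hg
  -- minimizer facts
  have gLeast : ∀ w : Ω → ℝ, (∀ ω, 0 ≤ w ω) →
      ∃ a : A, g w = S w a ∧ ∀ a' : A, S w a ≤ S w a' := by
    intro w hw
    obtain ⟨a, ha⟩ := hatt w hw
    refine ⟨a, ?_, ha⟩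
    have hleast : IsLeast {r : ℝ | ∃ a : A, r = S w a} (S w a) := by
      constructor
      · exact ⟨a, rfl⟩
      · rintro r ⟨a', rfl⟩; exact ha a'
    exact hleast.csInf_eq
  have gBdd : ∀ w : Ω → ℝ, (∀ ω, 0 ≤ w ω) →
      ∀ a : A, g w ≤ S w a := by
    intro w hw a
    obtain ⟨a0, ha0, ha0'⟩ := gLeast w hw
    exact ha0 ▸ ha0' a
  -- the three families of weights
  set wbc : WT → ZT → Ω → ℝ :=
    fun b c ω => if W ω = b ∧ Z ω = c then P ω else 0 with hwbc
  set ub : WT → Ω → ℝ := fun b ω => if W ω = b then P ω else 0 with hub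
  set wc : ZT → Ω → ℝ := fun c ω => if Z ω = c then P ω else 0 with hwc
  have hwbcnn : ∀ b c ω, 0 ≤ wbc b c ω := by
    intro b c ω; simp only [hwbc]; split <;> [exact hnn ω; exact le_rfl]
  have hubnn : ∀ b ω, 0 ≤ ub b ω := by
    intro b ω; simp only [hub]; split <;> [exact hnn ω; exact le_rfl]
  have hwcnn : ∀ c ω, 0 ≤ wc c ω := by
    intro c ω; simp only [hwc]; split <;> [exact hnn ω; exact le_rfl]
  -- pointwise splittings
  have hsplitc : ∀ c a, S (wc c) a = ∑ b, S (wbc b c) a := by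
    intro c a
    rw [Finset.sum_comm]
    apply Finset.sum_congr rfl
    intro ω _
    rw [← Finset.sum_mul]
    congr 1
    simp only [hwbc, hwc]
    by_cases h : Z ω = c
    · simp [h, Finset.sum_ite_eq' (Finset.univ : Finset WT) (W ω)]
    · simp [h]
  have hsplitb : ∀ b a, S (ub b) a = ∑ c, S (wbc b c) a := by
    intro b a
    rw [Finset.sum_comm]
    apply Finset.sum_congr rfl
    intro ω _
    rw [← Finset.sum_mul]
    congr 1
    simp only [hwbc, hub]
    by_cases h : W ω = b
    · simp [h, Finset.sum_ite_eq' (Finset.univ : Finset ZT) (Z ω)]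
    · simp [h]
  -- Step 2: for each b, a minimizer for ub b also minimizes each wbc b c
  have hfiber : ∀ b : WT, g (ub b) = ∑ c, g (wbc b c) := by
    intro b
    obtain ⟨a0, ha0eq, ha0min⟩ := gLeast (ub b) (hubnn b)
    have hmin : ∀ c : ZT, g (wbc b c) = S (wbc b c) a0 := by
      intro c
      have hleast : IsLeast {r : ℝ | ∃ a : A, r = S (wbc b c) a} (S (wbc b c) a0) := by
        constructor
        · exact ⟨a0, rfl⟩
        · rintro r ⟨a', rfl⟩
          -- S (wbc b c) a0 ≤ S (wbc b c) a'
          by_cases hb : (∑ ω, if W ω = b then P ω else 0) = 0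
          · -- all masses on {W = b} vanish
            have hz : ∀ ω, (if W ω = b then P ω else 0) = 0 := by
              intro ω
              have := (Finset.sum_eq_zero_iff_of_nonneg (by
                intro ω' _
                split <;> [exact hnn ω'; exact le_rfl])).mp hb ω (Finset.mem_univ ω)
              exact this
            have hz' : ∀ ω a, wbc b c ω * L (Y ω) a = 0 := by
              intro ω a
              simp only [hwbc]
              by_cases h : W ω = b ∧ Z ω = c
              · have := hz ω
                rw [if_pos h.1] at this
                simp [h, this]
              · simp [h]
            simp only [hS]
            rw [Finset.sum_eq_zero (fun ω _ => hz' ω a0),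
              Finset.sum_eq_zero (fun ω _ => hz' ω a')]
          · have hbpos : 0 < ∑ ω, if W ω = b then P ω else 0 := by
              have hsnn : (0:ℝ) ≤ ∑ ω, if W ω = b then P ω else 0 :=
                Finset.sum_nonneg (fun ω _ => by by_cases h : W ω = b <;> simp [h, hnn ω])
              rcases lt_or_eq_of_le hsnn with h | h
              · exact h
              · exact absurd h.symm hb
            have hmbc : (0:ℝ) ≤ ∑ ω, if W ω = b ∧ Z ω = c then P ω else 0 :=
              Finset.sum_nonneg (fun ω _ => by
                by_cases h : W ω = b ∧ Z ω = c <;> simp [h, hnn ω])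
            have h1 := hCI b c a0
            have h2 := hCI b c a'
            have hle : S (ub b) a0 * (∑ ω, if W ω = b ∧ Z ω = c then P ω else 0)
                ≤ S (ub b) a' * (∑ ω, if W ω = b ∧ Z ω = c then P ω else 0) :=
              mul_le_mul_of_nonneg_right (ha0min a') hmbc
            have key : S (wbc b c) a0 * (∑ ω, if W ω = b then P ω else 0)
                ≤ S (wbc b c) a' * (∑ ω, if W ω = b then P ω else 0) := by
              simp only [hS] at h1 h2 ⊢
              simp only [hS, hub, hwbc] at hle
              rw [h1, h2]
              exact hle
            exact le_of_mul_le_mul_right key hbpos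
      exact hleast.csInf_eq
    calc g (ub b) = S (ub b) a0 := ha0eq
      _ = ∑ c, S (wbc b c) a0 := hsplitb b a0
      _ = ∑ c, g (wbc b c) := by
          apply Finset.sum_congr rfl; intro c _; exact (hmin c).symm
  -- Step 1: refinement
  have hrefine : ∀ c : ZT, ∑ b, g (wbc b c) ≤ g (wc c) := by
    intro c
    obtain ⟨a0, ha0eq, _⟩ := gLeast (wc c) (hwcnn c)
    rw [ha0eq, hsplitc c a0]
    apply Finset.sum_le_sum
    intro b _
    exact gBdd (wbc b c) (hwbcnn b c) a0
  -- put together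
  have hW : condH P L Y W = ∑ b, g (ub b) := rfl
  have hZ : condH P L Y Z = ∑ c, g (wc c) := rfl
  rw [hW, hZ]
  calc ∑ b, g (ub b) = ∑ b, ∑ c, g (wbc b c) := Finset.sum_congr rfl (fun b _ => hfiber b)
    _ = ∑ c, ∑ b, g (wbc b c) := Finset.sum_comm
    _ ≤ ∑ c, g (wc c) := Finset.sum_le_sum (fun c _ => hrefine c)

/-- in the causal system `Y_t = f(X_{t−d})` with `{X_t}` a Markov
chain (`Xv δ` models `X_{t−δ}`), the L-conditional entropy `H_L(Y_t|X_{t−δ})` is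
nonincreasing in `δ` for `0 ≤ δ ≤ d`, nondecreasing in `δ` for `δ ≥ d`, equals
`H_L(Y_t|Y_t)` at `δ = d`, and `X_{t−d}` minimizes the conditional entropy over
all `𝒳`-valued random variables `Z`. -/
theorem stmt13 {Ω 𝒴 𝒳 A : Type*} [Fintype Ω] [Fintype 𝒳] [Fintype 𝒴]
    [DecidableEq 𝒳] [DecidableEq 𝒴]
    (P : Ω → ℝ) (L : 𝒴 → A → ℝ) (Xv : ℕ → Ω → 𝒳) (f : 𝒳 → 𝒴) (d : ℕ)
    (hnn : ∀ ω, 0 ≤ P ω) (h1 : ∑ ω, P ω = 1)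
    (hMarkov : ∀ i j k : ℕ, i ≤ j → j ≤ k → ∀ a b c : 𝒳,
      (∑ ω, if Xv i ω = a ∧ Xv j ω = b ∧ Xv k ω = c then P ω else 0) *
        (∑ ω, if Xv j ω = b then P ω else 0) =
      (∑ ω, if Xv i ω = a ∧ Xv j ω = b then P ω else 0) *
        (∑ ω, if Xv j ω = b ∧ Xv k ω = c then P ω else 0))
    (hattain : ∀ w : Ω → ℝ, (∀ ω, 0 ≤ w ω) →
      ∃ a : A, ∀ a' : A,
        ∑ ω, w ω * L (f (Xv d ω)) a ≤ ∑ ω, w ω * L (f (Xv d ω)) a') :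
    (∀ δ₁ δ₂ : ℕ, δ₁ ≤ δ₂ → δ₂ ≤ d →
      condH P L (fun ω => f (Xv d ω)) (Xv δ₂)
        ≤ condH P L (fun ω => f (Xv d ω)) (Xv δ₁))
    ∧ (∀ δ₁ δ₂ : ℕ, d ≤ δ₁ → δ₁ ≤ δ₂ →
      condH P L (fun ω => f (Xv d ω)) (Xv δ₁)
        ≤ condH P L (fun ω => f (Xv d ω)) (Xv δ₂))
    ∧ (condH P L (fun ω => f (Xv d ω)) (Xv d)
        = condH P L (fun ω => f (Xv d ω)) (fun ω => f (Xv d ω)))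
    ∧ (∀ Z : Ω → 𝒳,
      condH P L (fun ω => f (Xv d ω)) (Xv d)
        ≤ condH P L (fun ω => f (Xv d ω)) Z) := by
  classical
  have hattY : ∀ w : Ω → ℝ, (∀ ω, 0 ≤ w ω) →
      ∃ a : A, ∀ a' : A,
        ∑ ω, w ω * L ((fun ω => f (Xv d ω)) ω) a
          ≤ ∑ ω, w ω * L ((fun ω => f (Xv d ω)) ω) a' := hattain
  -- Part 1: δ₁ ≤ δ₂ ≤ d
  have part1 : ∀ δ₁ δ₂ : ℕ, δ₁ ≤ δ₂ → δ₂ ≤ d →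
      condH P L (fun ω => f (Xv d ω)) (Xv δ₂)
        ≤ condH P L (fun ω => f (Xv d ω)) (Xv δ₁) := by
    intro δ₁ δ₂ h12 h2d
    apply key P L (fun ω => f (Xv d ω)) (Xv δ₂) (Xv δ₁) hnn hattY
    intro b c a
    rw [sum_if_mul_fiber P (fun ω => Xv δ₂ ω = b ∧ Xv δ₁ ω = c) (Xv d) (fun x => L (f x) a),
        sum_if_mul_fiber P (fun ω => Xv δ₂ ω = b) (Xv d) (fun x => L (f x) a),
        Finset.sum_mul, Finset.sum_mul]
    apply Finset.sum_congr rfl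
    intro x _
    have hM := hMarkov δ₁ δ₂ d h12 h2d c b x
    have e1 : (∑ ω, if (Xv δ₂ ω = b ∧ Xv δ₁ ω = c) ∧ Xv d ω = x then P ω else 0)
        = ∑ ω, if Xv δ₁ ω = c ∧ Xv δ₂ ω = b ∧ Xv d ω = x then P ω else 0 :=
      sum_if_congr P _ _ (fun ω => by tauto)
    have e2 : (∑ ω, if Xv δ₂ ω = b ∧ Xv δ₁ ω = c then P ω else 0)
        = ∑ ω, if Xv δ₁ ω = c ∧ Xv δ₂ ω = b then P ω else 0 :=
      sum_if_congr P _ _ (fun ω => by tauto)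
    have hperm : (∑ ω, if (Xv δ₂ ω = b ∧ Xv δ₁ ω = c) ∧ Xv d ω = x then P ω else 0)
          * (∑ ω, if Xv δ₂ ω = b then P ω else 0)
        = (∑ ω, if Xv δ₂ ω = b ∧ Xv d ω = x then P ω else 0)
          * (∑ ω, if Xv δ₂ ω = b ∧ Xv δ₁ ω = c then P ω else 0) := by
      rw [e1, e2]
      linear_combination hM
    linear_combination (L (f x) a) * hperm
  -- Part 2: d ≤ δ₁ ≤ δ₂
  have part2 : ∀ δ₁ δ₂ : ℕ, d ≤ δ₁ → δ₁ ≤ δ₂ →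
      condH P L (fun ω => f (Xv d ω)) (Xv δ₁)
        ≤ condH P L (fun ω => f (Xv d ω)) (Xv δ₂) := by
    intro δ₁ δ₂ hd1 h12
    apply key P L (fun ω => f (Xv d ω)) (Xv δ₁) (Xv δ₂) hnn hattY
    intro b c a
    rw [sum_if_mul_fiber P (fun ω => Xv δ₁ ω = b ∧ Xv δ₂ ω = c) (Xv d) (fun x => L (f x) a),
        sum_if_mul_fiber P (fun ω => Xv δ₁ ω = b) (Xv d) (fun x => L (f x) a),
        Finset.sum_mul, Finset.sum_mul]
    apply Finset.sum_congr rfl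
    intro x _
    have hM := hMarkov d δ₁ δ₂ hd1 h12 x b c
    have e1 : (∑ ω, if (Xv δ₁ ω = b ∧ Xv δ₂ ω = c) ∧ Xv d ω = x then P ω else 0)
        = ∑ ω, if Xv d ω = x ∧ Xv δ₁ ω = b ∧ Xv δ₂ ω = c then P ω else 0 :=
      sum_if_congr P _ _ (fun ω => by tauto)
    have e2 : (∑ ω, if Xv δ₁ ω = b ∧ Xv d ω = x then P ω else 0)
        = ∑ ω, if Xv d ω = x ∧ Xv δ₁ ω = b then P ω else 0 :=
      sum_if_congr P _ _ (fun ω => by tauto)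
    have hperm : (∑ ω, if (Xv δ₁ ω = b ∧ Xv δ₂ ω = c) ∧ Xv d ω = x then P ω else 0)
          * (∑ ω, if Xv δ₁ ω = b then P ω else 0)
        = (∑ ω, if Xv δ₁ ω = b ∧ Xv d ω = x then P ω else 0)
          * (∑ ω, if Xv δ₁ ω = b ∧ Xv δ₂ ω = c then P ω else 0) := by
      rw [e1, e2]
      linear_combination hM
    linear_combination (L (f x) a) * hperm
  -- Optimality of conditioning on Y itself
  have leYZ : ∀ {ZT : Type _} [Fintype ZT] [DecidableEq ZT] (Z : Ω → ZT),
      condH P L (fun ω => f (Xv d ω)) (fun ω => f (Xv d ω))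
        ≤ condH P L (fun ω => f (Xv d ω)) Z := by
    intro ZT _ _ Z
    apply key P L (fun ω => f (Xv d ω)) (fun ω => f (Xv d ω)) Z hnn hattY
    intro b c a
    rw [sum_if_mul_const P (fun ω => f (Xv d ω) = b ∧ Z ω = c)
        (fun ω => f (Xv d ω)) b L a (fun ω h => h.1),
      sum_if_mul_const P (fun ω => f (Xv d ω) = b)
        (fun ω => f (Xv d ω)) b L a (fun ω h => h)]
    ring
  -- condH (Y | X_d) ≤ condH (Y | Y)
  have leXY : condH P L (fun ω => f (Xv d ω)) (Xv d)
      ≤ condH P L (fun ω => f (Xv d ω)) (fun ω => f (Xv d ω)) := by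
    apply key P L (fun ω => f (Xv d ω)) (Xv d) (fun ω => f (Xv d ω)) hnn hattY
    intro b c a
    rw [sum_if_mul_const P (fun ω => Xv d ω = b ∧ f (Xv d ω) = c)
        (fun ω => f (Xv d ω)) (f b) L a (fun ω h => congrArg f h.1),
      sum_if_mul_const P (fun ω => Xv d ω = b)
        (fun ω => f (Xv d ω)) (f b) L a (fun ω h => congrArg f h)]
    ring
  have part3 : condH P L (fun ω => f (Xv d ω)) (Xv d)
      = condH P L (fun ω => f (Xv d ω)) (fun ω => f (Xv d ω)) :=
    le_antisymm leXY (leYZ (Xv d))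
  refine ⟨part1, part2, part3, ?_⟩
  intro Z
  rw [part3]
  exact leYZ Z
end

section
/- In the Bellman optimality analysis of the single-source SMDP, if the index condition γ(δ) ≥ β̄ holds, where γ(δ) = inf_{τ≥1} (1/τ) Σ_{k=0}^{τ−1} E[p(δ+k+T₁)], then waiting is never strictly better than transmitting immediately at AoI δ: inf_{τ≥1} E[Σ_{k=0}^{τ+T₁−1}(p(δ+k) − β̄)] ≥ E[Σ_{k=0}^{T₁−1}(p(δ+k) − β̄)]. -/
/-!
Splitting each horizon `τ + T₁` at `T₁` writes the cost of waiting `τ` slots as the cost of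
transmitting immediately plus `Σ_{k<τ} (E[p(δ+k+T₁)] - β̄)`. The index condition says that every
Cesàro mean of `k ↦ E[p(δ+k+T₁)]` is at least `β̄`, so this extra term is nonnegative.
-/

open Finset

section CesaroMeans

variable {q : ℕ → ℝ} {β : ℝ}

theorem bddBelow_cesaroMeans (hq : BddBelow (Set.range q)) :
    BddBelow {x : ℝ | ∃ τ : ℕ, 1 ≤ τ ∧ x = (1 / (τ : ℝ)) * ∑ k ∈ range τ, q k} := by
  obtain ⟨c, hc⟩ := hq
  refine ⟨c, ?_⟩
  rintro x ⟨τ, hτ, rfl⟩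
  have hτ0 : (0 : ℝ) < τ := by exact_mod_cast hτ
  have hsum : τ * c ≤ ∑ k ∈ range τ, q k := by
    simpa using card_nsmul_le_sum (range τ) q c fun k _ => hc ⟨k, rfl⟩
  rw [one_div_mul_eq_div, le_div_iff₀ hτ0]
  linarith

theorem sum_range_sub_nonneg_of_le_sInf_cesaroMeans (hq : BddBelow (Set.range q))
    (hβ : β ≤ sInf {x : ℝ | ∃ τ : ℕ, 1 ≤ τ ∧ x = (1 / (τ : ℝ)) * ∑ k ∈ range τ, q k})
    {τ : ℕ} (hτ : 1 ≤ τ) :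
    0 ≤ ∑ k ∈ range τ, (q k - β) := by
  have hτ0 : (0 : ℝ) < τ := by exact_mod_cast hτ
  have hmean : β ≤ (1 / (τ : ℝ)) * ∑ k ∈ range τ, q k :=
    hβ.trans (csInf_le (bddBelow_cesaroMeans hq) ⟨τ, hτ, rfl⟩)
  rw [one_div_mul_eq_div, le_div_iff₀ hτ0] at hmean
  rw [sum_sub_distrib, sum_const, card_range, nsmul_eq_mul]
  linarith

end CesaroMeans

theorem bddBelow_range_weighted_shift {ι : Type*} (s : Finset ι) (w : ι → ℝ) (p : ℕ → ℝ)
    (shift : ℕ → ι → ℕ) {M : ℝ} (hM : ∀ n, |p n| ≤ M) :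
    BddBelow (Set.range fun k => ∑ t ∈ s, w t * p (shift k t)) := by
  refine ⟨-∑ t ∈ s, |w t| * M, ?_⟩
  rintro _ ⟨k, rfl⟩
  rw [neg_le, ← sum_neg_distrib]
  refine sum_le_sum fun t _ => ?_
  calc -(w t * p (shift k t)) ≤ |w t * p (shift k t)| := neg_le_abs _
    _ = |w t| * |p (shift k t)| := abs_mul _ _
    _ ≤ |w t| * M := mul_le_mul_of_nonneg_left (hM _) (abs_nonneg _)

theorem sum_mul_sum_range_add_sub (s : Finset ℕ) (w p : ℕ → ℝ) (β : ℝ) (δ τ : ℕ)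
    (hw : ∑ t ∈ s, w t = 1) :
    ∑ t ∈ s, w t * ∑ k ∈ range (τ + t), (p (δ + k) - β)
      = ∑ t ∈ s, w t * ∑ k ∈ range t, (p (δ + k) - β)
        + ∑ k ∈ range τ, (∑ t ∈ s, w t * p (δ + k + t) - β) := by
  have hsplit : ∀ t, w t * ∑ k ∈ range (τ + t), (p (δ + k) - β)
      = w t * ∑ k ∈ range t, (p (δ + k) - β)
        + ∑ k ∈ range τ, (w t * p (δ + k + t) - w t * β) := by
    intro t
    rw [add_comm τ t, sum_range_add, mul_add, mul_sum (range τ)]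
    congr 1
    refine sum_congr rfl fun k _ => ?_
    rw [show δ + (t + k) = δ + k + t by omega, mul_sub]
  have hmix : ∀ k, ∑ t ∈ s, (w t * p (δ + k + t) - w t * β)
      = ∑ t ∈ s, w t * p (δ + k + t) - β := by
    intro k
    rw [sum_sub_distrib, ← sum_mul, hw, one_mul]
  simp only [hsplit, sum_add_distrib]
  rw [sum_comm]
  simp only [hmix]

theorem stmt17_general (N : ℕ) (pT p : ℕ → ℝ) (M βbar : ℝ) (δ : ℕ)
    (hpT1 : ∑ t ∈ Finset.range N, pT t = 1)
    (hM : ∀ n, |p n| ≤ M)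
    (hidx : βbar ≤ sInf {x : ℝ | ∃ τ : ℕ, 1 ≤ τ ∧
      x = (1 / (τ : ℝ)) * ∑ k ∈ Finset.range τ,
            ∑ t ∈ Finset.range N, pT t * p (δ + k + t)}) :
    ∑ t ∈ Finset.range N, pT t * ∑ k ∈ Finset.range t, (p (δ + k) - βbar)
      ≤ sInf {x : ℝ | ∃ τ : ℕ, 1 ≤ τ ∧
          x = ∑ t ∈ Finset.range N, pT t *
                ∑ k ∈ Finset.range (τ + t), (p (δ + k) - βbar)} := by
  refine le_csInf ⟨_, 1, le_rfl, rfl⟩ ?_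
  rintro _ ⟨τ, hτ, rfl⟩
  rw [sum_mul_sum_range_add_sub _ _ _ _ _ _ hpT1]
  refine le_add_of_nonneg_right (sum_range_sub_nonneg_of_le_sInf_cesaroMeans ?_ hidx hτ)
  exact bddBelow_range_weighted_shift _ _ _ (fun k t => δ + k + t) hM

/-- if the index condition `γ(δ) ≥ β̄` holds, where
`γ(δ) = inf_{τ≥1} (1/τ) Σ_{k<τ} E[p(δ+k+T₁)]`, then waiting is never strictly
better than transmitting immediately at AoI `δ`:
`inf_{τ≥1} E[Σ_{k=0}^{τ+T₁−1} (p(δ+k) − β̄)] ≥ E[Σ_{k=0}^{T₁−1} (p(δ+k) − β̄)]`. -/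
theorem stmt17 (N : ℕ) (pT p : ℕ → ℝ) (M βbar : ℝ) (δ : ℕ)
    (hpTnn : ∀ t, 0 ≤ pT t) (hpT1 : ∑ t ∈ Finset.range N, pT t = 1)
    (hM : ∀ n, |p n| ≤ M)
    (hidx : βbar ≤ sInf {x : ℝ | ∃ τ : ℕ, 1 ≤ τ ∧
      x = (1 / (τ : ℝ)) * ∑ k ∈ Finset.range τ,
            ∑ t ∈ Finset.range N, pT t * p (δ + k + t)}) :
    ∑ t ∈ Finset.range N, pT t * ∑ k ∈ Finset.range t, (p (δ + k) - βbar)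
      ≤ sInf {x : ℝ | ∃ τ : ℕ, 1 ≤ τ ∧
          x = ∑ t ∈ Finset.range N, pT t *
                ∑ k ∈ Finset.range (τ + t), (p (δ + k) - βbar)} :=
  stmt17_general N pT p M βbar δ hpT1 hM hidx
end
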